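/- Let v be a trigonometric polynomial of degree ≤ N on 𝕋 with ‖v‖_{H¹} ≤ M. Then |Re ∫_𝕋 Π_{>N}(|v|² ∂_x v) · conj(v) |v|² dx| ≤ C N^{-1} M⁶ for an absolute constant C. -/

import Mathlib

open MeasureTheory Real Complex Function

/-- The `k`-th Fourier coefficient of a `2π`-periodic function `f : ℝ → ℂ`. -/
noncomputable def fCoeff (f : ℝ → ℂ) (k : ℤ) : ℂ :=
  (1 / (2 * π)) * ∫ x in (0 : ℝ)..(2 * π), f x * Complex.exp (-(k : ℂ) * Complex.I * x)

/-- The projection `Π_N` onto Fourier modes `|k| ≤ N`. -/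
noncomputable def projLe (N : ℕ) (f : ℝ → ℂ) : ℝ → ℂ := fun x =>
  ∑ k ∈ Finset.Icc (-(N : ℤ)) (N : ℤ), fCoeff f k * Complex.exp ((k : ℂ) * Complex.I * x)

/-- The projection `Π_{>N}` onto Fourier modes `|k| > N`. -/
noncomputable def projGt (N : ℕ) (f : ℝ → ℂ) : ℝ → ℂ := fun x => f x - projLe N f x

namespace KeyDet
open Finset

noncomputable def e (k : ℤ) (x : ℝ) : ℂ := Complex.exp ((k:ℂ) * Complex.I * x)

lemma continuous_e (k : ℤ) : Continuous (e k) :=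
  Complex.continuous_exp.comp (continuous_const.mul Complex.continuous_ofReal)

lemma e_mul (j k : ℤ) (x : ℝ) : e j x * e k x = e (j + k) x := by
  unfold e; rw [← Complex.exp_add]; congr 1; push_cast; ring

lemma e_hasDerivAt (k : ℤ) (x : ℝ) :
    HasDerivAt (e k) (((k:ℂ) * Complex.I) * e k x) x := by
  have h1 : HasDerivAt (fun x : ℝ => ((k:ℂ) * Complex.I) * (x:ℂ)) ((k:ℂ)*Complex.I) x := by
    simpa using (Complex.ofRealCLM.hasDerivAt (x := x)).const_mul ((k:ℂ)*Complex.I)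
  have h2 := h1.cexp
  unfold e
  convert h2 using 1
  ring

lemma integral_e (m : ℤ) :
    (∫ x in (0:ℝ)..(2*π), e m x) = if m = 0 then ((2*π:ℝ):ℂ) else 0 := by
  rcases eq_or_ne m 0 with hm | hm
  · subst hm
    simp [e, Real.pi_pos.le]
  · have hmc : ((m:ℂ) * Complex.I) ≠ 0 := by
      apply mul_ne_zero _ Complex.I_ne_zero
      exact_mod_cast hm
    have key : ∀ x ∈ Set.uIcc (0:ℝ) (2*π),
        HasDerivAt (fun y => ((m:ℂ)*Complex.I)⁻¹ * e m y) (e m x) x := by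
      intro x _
      have := (e_hasDerivAt m x).const_mul (((m:ℂ)*Complex.I)⁻¹)
      rwa [show ((m:ℂ)*Complex.I)⁻¹ * (((m:ℂ) * Complex.I) * e m x) = e m x by
        field_simp] at this
    rw [intervalIntegral.integral_eq_sub_of_hasDerivAt key
      ((continuous_e m).intervalIntegrable _ _)]
    have h2 : e m (2*π) = 1 := by
      unfold e
      push_cast
      rw [show (m:ℂ) * Complex.I * (2*(π:ℂ)) = (m:ℂ) * (2*(π:ℂ)*Complex.I) by ring]
      exact Complex.exp_int_mul_two_pi_mul_I m
    have h0 : e m 0 = 1 := by simp [e]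
    rw [h2, h0]; simp [hm]


open Finset



lemma key_integral {ι κ : Type*} (A : Finset ι) (B : Finset κ)
    (φ : ι → ℂ) (ψ : κ → ℂ) (dA : ι → ℤ) (dB : κ → ℤ) :
    (∫ x in (0:ℝ)..(2*π), (∑ i ∈ A, φ i * e (dA i) x) * (∑ j ∈ B, ψ j * e (dB j) x))
      = (2*π) * ∑ i ∈ A, ∑ j ∈ B, (if dA i + dB j = 0 then φ i * ψ j else 0) := by
  have hpt : ∀ x : ℝ, (∑ i ∈ A, φ i * e (dA i) x) * (∑ j ∈ B, ψ j * e (dB j) x)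
      = ∑ i ∈ A, ∑ j ∈ B, (φ i * ψ j) * e (dA i + dB j) x := by
    intro x
    rw [Finset.sum_mul_sum]
    refine Finset.sum_congr rfl fun i _ => Finset.sum_congr rfl fun j _ => ?_
    rw [← e_mul]; ring
  rw [intervalIntegral.integral_congr (g := fun x => ∑ i ∈ A, ∑ j ∈ B, (φ i * ψ j) * e (dA i + dB j) x) (fun x _ => hpt x)]
  rw [intervalIntegral.integral_finset_sum]
  swap
  · exact fun i _ => (continuous_finset_sum _ fun j _ =>
      continuous_const.mul (continuous_e _)).intervalIntegrable _ _
  rw [Finset.mul_sum]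
  refine Finset.sum_congr rfl fun i _ => ?_
  rw [intervalIntegral.integral_finset_sum]
  swap
  · exact fun j _ => (continuous_const.mul (continuous_e _)).intervalIntegrable _ _
  rw [Finset.mul_sum]
  refine Finset.sum_congr rfl fun j _ => ?_
  rw [intervalIntegral.integral_const_mul, integral_e]
  split_ifs <;> push_cast <;> ring

lemma fCoeff_sum {ι : Type*} (A : Finset ι) (φ : ι → ℂ) (d : ι → ℤ) (a : ℤ) :
    fCoeff (fun x => ∑ i ∈ A, φ i * e (d i) x) a
      = ∑ i ∈ A, (if d i = a then φ i else 0) := by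
  unfold fCoeff
  have hexp : ∀ x : ℝ, Complex.exp (-(a:ℂ) * Complex.I * x)
      = ∑ j ∈ ({0} : Finset ℕ), (fun _ => (1:ℂ)) j * e ((fun _ => -a) j) x := by
    intro x; simp only [Finset.sum_singleton, one_mul, e]; push_cast; ring_nf
  have : (∫ x in (0:ℝ)..(2*π), (∑ i ∈ A, φ i * e (d i) x) * Complex.exp (-(a:ℂ) * Complex.I * x))
      = (∫ x in (0:ℝ)..(2*π), (∑ i ∈ A, φ i * e (d i) x) *
          (∑ j ∈ ({0} : Finset ℕ), (fun _ => (1:ℂ)) j * e ((fun _ => -a) j) x)) := by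
    refine intervalIntegral.integral_congr fun x _ => by rw [hexp x]
  rw [this, key_integral]
  have hπ : ((2*π : ℝ):ℂ) ≠ 0 := by
    exact_mod_cast mul_ne_zero two_ne_zero Real.pi_ne_zero
  push_cast
  rw [show (1:ℂ) / (2 * (π:ℂ)) * (2 * (π:ℂ) * ∑ i ∈ A, ∑ j ∈ ({0}:Finset ℕ),
      (if d i + -a = 0 then φ i * 1 else 0)) = ∑ i ∈ A, ∑ j ∈ ({0}:Finset ℕ),
      (if d i + -a = 0 then φ i * 1 else 0) from by
    have h2 : (2 * (π:ℂ)) ≠ 0 := by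
      exact_mod_cast mul_ne_zero two_ne_zero (by exact_mod_cast Real.pi_ne_zero)
    field_simp]
  refine Finset.sum_congr rfl fun i _ => ?_
  rw [Finset.sum_singleton]
  rcases eq_or_ne (d i) a with h | h
  · simp [h]
  · rw [if_neg (by omega), if_neg h]

lemma projLe_sum (N : ℕ) {ι : Type*} (A : Finset ι) (φ : ι → ℂ) (d : ι → ℤ) (x : ℝ) :
    projLe N (fun x => ∑ i ∈ A, φ i * e (d i) x) x
      = ∑ a ∈ Finset.Icc (-(N:ℤ)) (N:ℤ), (∑ i ∈ A, if d i = a then φ i else 0) * e a x := by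
  unfold projLe
  refine Finset.sum_congr rfl fun a _ => ?_
  rw [fCoeff_sum]; rfl


open Finset

/-- Cauchy–Schwarz with square roots. -/
lemma cs_sqrt (A : Finset ℤ) (f g : ℤ → ℝ) (hf : ∀ a ∈ A, 0 ≤ f a) (hg : ∀ a ∈ A, 0 ≤ g a) :
    ∑ a ∈ A, f a * g a ≤ Real.sqrt (∑ a ∈ A, f a ^ 2) * Real.sqrt (∑ a ∈ A, g a ^ 2) := by
  have h := Finset.sum_mul_sq_le_sq_mul_sq A f g
  have h0 : 0 ≤ ∑ a ∈ A, f a * g a :=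
    Finset.sum_nonneg fun a ha => mul_nonneg (hf a ha) (hg a ha)
  calc ∑ a ∈ A, f a * g a = Real.sqrt ((∑ a ∈ A, f a * g a) ^ 2) := by
        rw [Real.sqrt_sq h0]
    _ ≤ Real.sqrt ((∑ a ∈ A, f a ^ 2) * ∑ a ∈ A, g a ^ 2) := Real.sqrt_le_sqrt h
    _ = _ := Real.sqrt_mul (Finset.sum_nonneg fun a _ => sq_nonneg _) _

/-- discrete Young: `ℓ¹ * ℓ²` bound. -/
lemma young {ι : Type*} (A : Finset ℤ) (P : Finset ι) (u : ι → ℝ) (hu : ∀ p ∈ P, 0 ≤ u p)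
    (w : ℤ → ℝ) (σ : ι → ℤ → ℤ) (W : ℝ)
    (hW : ∀ p ∈ P, ∑ a ∈ A, (w (σ p a))^2 ≤ W) :
    ∑ a ∈ A, (∑ p ∈ P, u p * w (σ p a))^2 ≤ (∑ p ∈ P, u p)^2 * W := by
  have step : ∀ a ∈ A, (∑ p ∈ P, u p * w (σ p a))^2
      ≤ (∑ p ∈ P, u p) * ∑ p ∈ P, u p * (w (σ p a))^2 := by
    intro a _
    have h := Finset.sum_mul_sq_le_sq_mul_sq P (fun p => Real.sqrt (u p))
      (fun p => Real.sqrt (u p) * w (σ p a))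
    calc (∑ p ∈ P, u p * w (σ p a))^2
        = (∑ p ∈ P, Real.sqrt (u p) * (Real.sqrt (u p) * w (σ p a)))^2 := by
          congr 1; refine Finset.sum_congr rfl fun p hp => ?_
          rw [← mul_assoc, Real.mul_self_sqrt (hu p hp)]
      _ ≤ (∑ p ∈ P, Real.sqrt (u p) ^ 2) * ∑ p ∈ P, (Real.sqrt (u p) * w (σ p a))^2 := h
      _ = (∑ p ∈ P, u p) * ∑ p ∈ P, u p * (w (σ p a))^2 := by
          congr 1
          · refine Finset.sum_congr rfl fun p hp => Real.sq_sqrt (hu p hp)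
          · refine Finset.sum_congr rfl fun p hp => by
              rw [mul_pow, Real.sq_sqrt (hu p hp)]
  calc ∑ a ∈ A, (∑ p ∈ P, u p * w (σ p a))^2
      ≤ ∑ a ∈ A, (∑ p ∈ P, u p) * ∑ p ∈ P, u p * (w (σ p a))^2 :=
        Finset.sum_le_sum step
    _ = (∑ p ∈ P, u p) * ∑ p ∈ P, u p * ∑ a ∈ A, (w (σ p a))^2 := by
        rw [← Finset.mul_sum]; congr 1; rw [Finset.sum_comm]
        exact Finset.sum_congr rfl fun p _ => by rw [Finset.mul_sum]
    _ ≤ (∑ p ∈ P, u p) * ∑ p ∈ P, u p * W := by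
        have h1 : 0 ≤ ∑ p ∈ P, u p := Finset.sum_nonneg hu
        refine mul_le_mul_of_nonneg_left (Finset.sum_le_sum fun p hp => ?_) h1
        exact mul_le_mul_of_nonneg_left (hW p hp) (hu p hp)
    _ = (∑ p ∈ P, u p)^2 * W := by rw [← Finset.sum_mul]; ring

/-- Sum of translated squares is bounded by full sum, for `w` vanishing off `K`. -/
lemma shift_bound (K A : Finset ℤ) (w : ℤ → ℝ) (hw : ∀ m, m ∉ K → w m = 0)
    (ε t : ℤ) (hε : ε = 1 ∨ ε = -1) :
    ∑ a ∈ A, (w (ε * a + t))^2 ≤ ∑ m ∈ K, (w m)^2 := by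
  have hinj : Set.InjOn (fun a => ε * a + t) A := by
    intro a _ b _ hab
    simp only at hab
    rcases hε with h | h <;> subst h <;> omega
  rw [← Finset.sum_image (f := fun m => (w m)^2) hinj]
  have h1 : ∑ m ∈ A.image (fun a => ε * a + t), (w m)^2
      = ∑ m ∈ (A.image (fun a => ε * a + t)) ∩ K, (w m)^2 := by
    refine (Finset.sum_subset Finset.inter_subset_left fun m hm hm' => ?_).symm
    have : m ∉ K := fun hK => hm' (Finset.mem_inter.mpr ⟨hm, hK⟩)
    rw [hw m this]; ring
  rw [h1]
  exact Finset.sum_le_sum_of_subset_of_nonneg Finset.inter_subset_right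
    fun m _ _ => sq_nonneg _

/-- regrouping a sum over `t` by the value of `d t`. -/
lemma regroup {ι : Type*} (T : Finset ι) (A : Finset ℤ) (d : ι → ℤ)
    (hd : ∀ t ∈ T, d t ∈ A) (u : ι → ℝ) (Y : ℤ → ℝ) :
    ∑ t ∈ T, u t * Y (d t)
      = ∑ a ∈ A, (∑ t ∈ T, if d t = a then u t else 0) * Y a := by
  have : ∀ a, (∑ t ∈ T, if d t = a then u t else 0) * Y a
      = ∑ t ∈ T, if d t = a then u t * Y a else 0 := by
    intro a; rw [Finset.sum_mul]
    exact Finset.sum_congr rfl fun t _ => by split_ifs <;> ring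
  simp only [this]
  rw [Finset.sum_comm]
  refine Finset.sum_congr rfl fun t ht => ?_
  rw [Finset.sum_ite_eq (A) (d t) (fun a => u t * Y a), if_pos (hd t ht)]

/-- `∑_{|k| ≤ N} 1/(1+k²) ≤ 5`. -/
lemma sum_inv_one_add_sq (N : ℕ) :
    ∑ k ∈ Finset.Icc (-(N:ℤ)) (N:ℤ), (1 + (k:ℝ)^2)⁻¹ ≤ 5 := by
  have key : ∀ n : ℕ, ∑ k ∈ Finset.Icc (-(n:ℤ)) (n:ℤ), (1 + (k:ℝ)^2)⁻¹
      ≤ 5 - 4 / ((n:ℝ) + 1) := by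
    intro n
    induction n with
    | zero => norm_num
    | succ n ih =>
      have hsplit : Finset.Icc (-(n+1:ℤ)) (n+1:ℤ)
          = insert (-(n+1:ℤ)) (insert ((n+1:ℤ)) (Finset.Icc (-(n:ℤ)) (n:ℤ))) := by
        ext k
        simp only [Finset.mem_Icc, Finset.mem_insert]
        omega
      have h1 : ((n+1:ℤ)) ∉ Finset.Icc (-(n:ℤ)) (n:ℤ) := by
        simp only [Finset.mem_Icc]; omega
      have h2 : (-(n+1:ℤ)) ∉ insert ((n+1:ℤ)) (Finset.Icc (-(n:ℤ)) (n:ℤ)) := by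
        simp only [Finset.mem_insert, Finset.mem_Icc]; omega
      push_cast
      push_cast at hsplit
      rw [hsplit, Finset.sum_insert h2, Finset.sum_insert h1]
      push_cast
      have hn1 : (0:ℝ) < (n:ℝ)+1 := by positivity
      have hn2 : (0:ℝ) < (n:ℝ)+2 := by positivity
      have hb : (1 + ((n:ℝ)+1)^2)⁻¹ ≤ 2 / (((n:ℝ)+1) * ((n:ℝ)+2)) := by
        rw [inv_eq_one_div, div_le_div_iff₀ (by positivity) (by positivity)]
        nlinarith [sq_nonneg ((n:ℝ))]
      rw [show (-((n:ℝ)+1))^2 = ((n:ℝ)+1)^2 by ring]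
      have hfin : 2 * (2 / (((n:ℝ)+1) * ((n:ℝ)+2))) = 4/((n:ℝ)+1) - 4/((n:ℝ)+2) := by
        field_simp
        ring
      rw [show ((n:ℝ)+1+1) = (n:ℝ)+2 by ring]
      linarith [hb, ih, hfin]
  have := key N
  have h4 : 0 ≤ 4 / ((N:ℝ)+1) := by positivity
  linarith


lemma conj_e (k : ℤ) (x : ℝ) : (starRingEnd ℂ) (e k x) = e (-k) x := by
  unfold e
  rw [← Complex.exp_conj]
  congr 1
  simp only [map_mul, Complex.conj_I, Complex.conj_ofReal, map_intCast]
  push_cast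
  ring

lemma sum_mul_expand {ι κ : Type*} (A : Finset ι) (B : Finset κ)
    (φ : ι → ℂ) (ψ : κ → ℂ) (dA : ι → ℤ) (dB : κ → ℤ) (x : ℝ) :
    (∑ i ∈ A, φ i * e (dA i) x) * (∑ j ∈ B, ψ j * e (dB j) x)
      = ∑ p ∈ A ×ˢ B, (φ p.1 * ψ p.2) * e (dA p.1 + dB p.2) x := by
  rw [Finset.sum_mul_sum, Finset.sum_product]
  exact Finset.sum_congr rfl fun i _ => Finset.sum_congr rfl fun j _ => by
    rw [← e_mul]; ring

lemma collapse (K : Finset ℤ) (w : ℤ → ℝ) (hw : ∀ m ∉ K, w m = 0) (X : ℝ) (s0 : ℤ)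
    (P : ℤ → Prop) [DecidablePred P] (hP : ∀ p, P p ↔ p = s0) :
    ∑ p ∈ K, (if P p then w p * X else 0) = w s0 * X := by
  have h1 : ∀ p ∈ K, (if P p then w p * X else 0) = (if p = s0 then w p * X else 0) :=
    fun p _ => if_congr (hP p) rfl rfl
  rw [Finset.sum_congr rfl h1, Finset.sum_ite_eq' K s0 (fun p => w p * X)]
  split_ifs with h
  · rfl
  · rw [hw s0 h]; ring

lemma re_integral (f : ℝ → ℂ) (hf : Continuous f) :
    (∫ x in (0:ℝ)..(2*π), f x).re = ∫ x in (0:ℝ)..(2*π), (f x).re := by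
  exact (Complex.reCLM.intervalIntegral_comp_comm
    (hf.intervalIntegrable _ _)).symm

lemma young_pair (A K : Finset ℤ) (c : ℤ → ℂ) (w : ℤ → ℝ) (hw0 : ∀ m ∉ K, w m = 0)
    (ε : ℤ) (hε : ε = 1 ∨ ε = -1) (τ : ℤ × ℤ → ℤ) :
    ∑ a ∈ A, (∑ p ∈ K ×ˢ K, (‖c p.1‖ * ‖c p.2‖) * w (ε * a + τ p))^2
      ≤ ((∑ k ∈ K, ‖c k‖)^2)^2 * ∑ m ∈ K, (w m)^2 := by
  have h := young A (K ×ˢ K) (fun p => ‖c p.1‖ * ‖c p.2‖)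
    (fun p _ => by positivity) w (fun p a => ε * a + τ p)
    (∑ m ∈ K, (w m)^2) (fun p _ => shift_bound K A w hw0 ε (τ p) hε)
  have hprod : ∑ p ∈ K ×ˢ K, (‖c p.1‖ * ‖c p.2‖) = (∑ k ∈ K, ‖c k‖)^2 := by
    rw [Finset.sum_product, sq, Finset.sum_mul_sum]
  rwa [hprod] at h

end KeyDet

set_option maxHeartbeats 1000000 in
/-- Key deterministic estimate: for a trigonometric polynomial `v` of degree `≤ N`
with `‖v‖_{H¹} ≤ M`, `|Re ∫ Π_{>N}(|v|²∂v) · conj(v)|v|² dx| ≤ C N⁻¹ M⁶`. -/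
theorem key_deterministic_estimate :
    ∃ C : ℝ, 0 < C ∧ ∀ N : ℕ, 1 ≤ N → ∀ v : ℝ → ℂ, ∀ M : ℝ,
      ContDiff ℝ (⊤ : ℕ∞) v → Periodic v (2 * π) → v = projLe N v →
      Real.sqrt (∫ x in (0 : ℝ)..(2 * π), (‖v x‖ ^ 2 + ‖deriv v x‖ ^ 2)) ≤ M →
      |(∫ x in (0 : ℝ)..(2 * π),
          projGt N (fun y => (v y * (starRingEnd ℂ) (v y)) * deriv v y) x *
            ((starRingEnd ℂ) (v x) * (v x * (starRingEnd ℂ) (v x)))).re|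
        ≤ C * (N : ℝ)⁻¹ * M ^ 6 := by
  classical
  refine ⟨2, by norm_num, ?_⟩
  intro N hN v M hsm hper hproj hM
  set K : Finset ℤ := Finset.Icc (-(N:ℤ)) (N:ℤ) with hKdef
  set c : ℤ → ℂ := fun k => if k ∈ K then fCoeff v k else 0 with hcdef
  have hc0 : ∀ k, k ∉ K → c k = 0 := fun k hk => by simp [hcdef, hk]
  have hv : ∀ x, v x = ∑ k ∈ K, c k * KeyDet.e k x := by
    intro x
    conv_lhs => rw [hproj]
    unfold projLe
    refine Finset.sum_congr rfl fun k hk => ?_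
    simp only [hcdef, if_pos hk]
    rfl
  have hvfun : v = fun x => ∑ k ∈ K, c k * KeyDet.e k x := funext hv
  have hderiv : deriv v = fun x => ∑ k ∈ K, ((k:ℂ) * Complex.I * c k) * KeyDet.e k x := by
    funext x
    rw [hvfun]
    have hD : HasDerivAt (fun y => ∑ k ∈ K, c k * KeyDet.e k y)
        (∑ k ∈ K, c k * (((k:ℂ) * Complex.I) * KeyDet.e k x)) x :=
      HasDerivAt.fun_sum fun k _ => (KeyDet.e_hasDerivAt k x).const_mul (c k)
    rw [hD.deriv]
    exact Finset.sum_congr rfl fun k _ => by ring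
  have hconj : ∀ x, (starRingEnd ℂ) (v x)
      = ∑ k ∈ K, (starRingEnd ℂ) (c k) * KeyDet.e (-k) x := by
    intro x
    rw [hv x, map_sum]
    exact Finset.sum_congr rfl fun k _ => by rw [map_mul, KeyDet.conj_e]
  -- F and G as trigonometric sums
  set φF : (ℤ × ℤ) × ℤ → ℂ := fun t =>
    (c t.1.1 * (starRingEnd ℂ) (c t.1.2)) * ((t.2:ℂ) * Complex.I * c t.2) with hφFdef
  set dF : (ℤ × ℤ) × ℤ → ℤ := fun t => t.1.1 + -t.1.2 + t.2 with hdFdef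
  set φG : ℤ × (ℤ × ℤ) → ℂ := fun s =>
    (starRingEnd ℂ) (c s.1) * (c s.2.1 * (starRingEnd ℂ) (c s.2.2)) with hφGdef
  set dG : ℤ × (ℤ × ℤ) → ℤ := fun s => -s.1 + (s.2.1 + -s.2.2) with hdGdef
  have hF : ∀ x, (v x * (starRingEnd ℂ) (v x)) * deriv v x
      = ∑ t ∈ (K ×ˢ K) ×ˢ K, φF t * KeyDet.e (dF t) x := by
    intro x
    rw [hconj x, hv x, hderiv,
      KeyDet.sum_mul_expand K K c (fun k => (starRingEnd ℂ) (c k)) (fun k => k) (fun k => -k) x,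
      KeyDet.sum_mul_expand (K ×ˢ K) K _ (fun k => (k:ℂ) * Complex.I * c k)
        (fun p => p.1 + -p.2) (fun k => k) x]
  have hG : ∀ x, (starRingEnd ℂ) (v x) * (v x * (starRingEnd ℂ) (v x))
      = ∑ s ∈ K ×ˢ (K ×ˢ K), φG s * KeyDet.e (dG s) x := by
    intro x
    rw [hconj x, hv x,
      KeyDet.sum_mul_expand K K c (fun k => (starRingEnd ℂ) (c k)) (fun k => k) (fun k => -k) x,
      KeyDet.sum_mul_expand K (K ×ˢ K) (fun k => (starRingEnd ℂ) (c k)) _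
        (fun k => -k) (fun p => p.1 + -p.2) x]
  set fs : ℤ → ℂ := fun a => ∑ t ∈ (K ×ˢ K) ×ˢ K, if dF t = a then φF t else 0 with hfsdef
  set g : ℤ → ℂ := fun b => ∑ s ∈ K ×ˢ (K ×ˢ K), if dG s = b then φG s else 0 with hgdef
  have hPF : ∀ x, projLe N (fun y => (v y * (starRingEnd ℂ) (v y)) * deriv v y) x
      = ∑ a ∈ K, fs a * KeyDet.e a x := by
    intro x
    rw [show (fun y => (v y * (starRingEnd ℂ) (v y)) * deriv v y)
        = fun y => ∑ t ∈ (K ×ˢ K) ×ˢ K, φF t * KeyDet.e (dF t) y from funext hF]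
    exact KeyDet.projLe_sum N _ φF dF x
  -- continuity facts
  have hcF : Continuous (fun x => ∑ t ∈ (K ×ˢ K) ×ˢ K, φF t * KeyDet.e (dF t) x) :=
    continuous_finset_sum _ fun t _ => continuous_const.mul (KeyDet.continuous_e _)
  have hcG : Continuous (fun x => ∑ s ∈ K ×ˢ (K ×ˢ K), φG s * KeyDet.e (dG s) x) :=
    continuous_finset_sum _ fun s _ => continuous_const.mul (KeyDet.continuous_e _)
  have hcP : Continuous (fun x => ∑ a ∈ K, fs a * KeyDet.e a x) :=
    continuous_finset_sum _ fun a _ => continuous_const.mul (KeyDet.continuous_e _)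
  -- split the integral
  have hsplit : (∫ x in (0:ℝ)..(2*π),
        projGt N (fun y => (v y * (starRingEnd ℂ) (v y)) * deriv v y) x *
          ((starRingEnd ℂ) (v x) * (v x * (starRingEnd ℂ) (v x))))
      = (∫ x in (0:ℝ)..(2*π), (∑ t ∈ (K ×ˢ K) ×ˢ K, φF t * KeyDet.e (dF t) x)
            * (∑ s ∈ K ×ˢ (K ×ˢ K), φG s * KeyDet.e (dG s) x))
        - (∫ x in (0:ℝ)..(2*π), (∑ a ∈ K, fs a * KeyDet.e a x)
            * (∑ s ∈ K ×ˢ (K ×ˢ K), φG s * KeyDet.e (dG s) x)) := by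
    rw [← intervalIntegral.integral_sub ((hcF.fun_mul hcG).intervalIntegrable _ _)
      ((hcP.fun_mul hcG).intervalIntegrable _ _)]
    refine intervalIntegral.integral_congr fun x _ => ?_
    show (projGt N (fun y => (v y * (starRingEnd ℂ) (v y)) * deriv v y) x) * _ = _
    unfold projGt
    show (v x * (starRingEnd ℂ) (v x) * deriv v x
        - projLe N (fun y => v y * (starRingEnd ℂ) (v y) * deriv v y) x) * _ = _
    rw [hF x, hG x, hPF x]
    ring
  have hstepA : ∀ (z : ℂ) (b : ℤ),
      (∑ s ∈ K ×ˢ (K ×ˢ K), if b + dG s = 0 then z * φG s else 0) = z * g (-b) := by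
    intro z b
    rw [hgdef]
    simp only []
    rw [Finset.mul_sum]
    refine Finset.sum_congr rfl fun s _ => ?_
    by_cases h : dG s = -b
    · rw [if_pos (by omega), if_pos h]
    · rw [if_neg (by omega), if_neg h, mul_zero]
  have hI1 : (∫ x in (0:ℝ)..(2*π), (∑ t ∈ (K ×ˢ K) ×ˢ K, φF t * KeyDet.e (dF t) x)
        * (∑ s ∈ K ×ˢ (K ×ˢ K), φG s * KeyDet.e (dG s) x))
      = (2*π) * ∑ t ∈ (K ×ˢ K) ×ˢ K, φF t * g (-(dF t)) := by
    rw [KeyDet.key_integral]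
    congr 1
    exact Finset.sum_congr rfl fun t _ => hstepA (φF t) (dF t)
  have hI2 : (∫ x in (0:ℝ)..(2*π), (∑ a ∈ K, fs a * KeyDet.e a x)
        * (∑ s ∈ K ×ˢ (K ×ˢ K), φG s * KeyDet.e (dG s) x))
      = (2*π) * ∑ t ∈ (K ×ˢ K) ×ˢ K, (if dF t ∈ K then φF t * g (-(dF t)) else 0) := by
    rw [KeyDet.key_integral]
    congr 1
    rw [Finset.sum_congr rfl fun a _ => hstepA (fs a) a]
    have h2 : ∀ a, fs a * g (-a)
        = ∑ t ∈ (K ×ˢ K) ×ˢ K, (if dF t = a then φF t * g (-a) else 0) := by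
      intro a
      rw [hfsdef]
      simp only []
      rw [Finset.sum_mul]
      exact Finset.sum_congr rfl fun t _ => by rw [ite_mul, zero_mul]
    rw [Finset.sum_congr rfl fun a _ => h2 a, Finset.sum_comm]
    exact Finset.sum_congr rfl fun t _ =>
      Finset.sum_ite_eq K (dF t) (fun a => φF t * g (-a))
  set T' : Finset ((ℤ × ℤ) × ℤ) := ((K ×ˢ K) ×ˢ K).filter (fun t => dF t ∉ K) with hT'def
  have hmain : (∫ x in (0:ℝ)..(2*π),
        projGt N (fun y => (v y * (starRingEnd ℂ) (v y)) * deriv v y) x *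
          ((starRingEnd ℂ) (v x) * (v x * (starRingEnd ℂ) (v x))))
      = (2*π) * ∑ t ∈ T', φF t * g (-(dF t)) := by
    rw [hsplit, hI1, hI2, ← mul_sub, ← Finset.sum_sub_distrib]
    congr 1
    rw [hT'def, Finset.sum_filter]
    refine Finset.sum_congr rfl fun t _ => ?_
    by_cases h : dF t ∈ K
    · simp [h]
    · simp [h]
  -- real quantities
  set w : ℤ → ℝ := fun m => |(m:ℝ)| * ‖c m‖ with hwdef
  have hw0 : ∀ m, m ∉ K → w m = 0 := fun m hm => by
    simp [hwdef, hc0 m hm]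
  set A' : Finset ℤ := (Finset.Icc (-(3*(N:ℤ))) (3*(N:ℤ))) \ K with hA'def
  set Ft : ℤ → ℝ := fun a => ∑ t ∈ (K ×ˢ K) ×ˢ K, if dF t = a then ‖φF t‖ else 0 with hFtdef
  have hNR : (0:ℝ) < (N:ℝ) := by exact_mod_cast Nat.lt_of_lt_of_le Nat.zero_lt_one hN
  -- step 1 : take re and norms
  have hstep1 : |(∫ x in (0:ℝ)..(2*π),
        projGt N (fun y => (v y * (starRingEnd ℂ) (v y)) * deriv v y) x *
          ((starRingEnd ℂ) (v x) * (v x * (starRingEnd ℂ) (v x)))).re|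
      ≤ 2*π * ∑ t ∈ T', ‖φF t‖ * ‖g (-(dF t))‖ := by
    rw [hmain]
    calc |((2*↑π : ℂ) * ∑ t ∈ T', φF t * g (-(dF t))).re|
        ≤ ‖(2*↑π : ℂ) * ∑ t ∈ T', φF t * g (-(dF t))‖ :=
          Complex.abs_re_le_norm _
      _ = 2*π * ‖∑ t ∈ T', φF t * g (-(dF t))‖ := by
          rw [norm_mul]
          congr 1
          simp [abs_of_pos Real.pi_pos]
      _ ≤ 2*π * ∑ t ∈ T', ‖φF t * g (-(dF t))‖ :=
          mul_le_mul_of_nonneg_left (norm_sum_le _ _) (by positivity)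
      _ = 2*π * ∑ t ∈ T', ‖φF t‖ * ‖g (-(dF t))‖ := by
          congr 1
          exact Finset.sum_congr rfl fun t _ => norm_mul _ _
  -- step 2 : gain N⁻¹
  have hstep2 : ∑ t ∈ T', ‖φF t‖ * ‖g (-(dF t))‖
      ≤ (N:ℝ)⁻¹ * ∑ t ∈ T', ‖φF t‖ * (|((dF t : ℤ):ℝ)| * ‖g (-(dF t))‖) := by
    rw [Finset.mul_sum]
    refine Finset.sum_le_sum fun t ht => ?_
    have htK : dF t ∉ K := (Finset.mem_filter.mp ht).2
    have habs : (N:ℝ) + 1 ≤ |((dF t : ℤ):ℝ)| := by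
      have h1 : (N:ℤ) + 1 ≤ dF t ∨ dF t ≤ -((N:ℤ) + 1) := by
        rw [hKdef, Finset.mem_Icc] at htK
        omega
      rcases h1 with h | h
      · exact le_abs.mpr (Or.inl (by exact_mod_cast h))
      · exact le_abs.mpr (Or.inr (by exact_mod_cast (by omega : ((N:ℤ)+1) ≤ -(dF t))))
    have h1 : 1 ≤ (N:ℝ)⁻¹ * |((dF t : ℤ):ℝ)| := by
      rw [inv_mul_eq_div, le_div_iff₀ hNR]
      linarith
    calc ‖φF t‖ * ‖g (-(dF t))‖ = (‖φF t‖ * ‖g (-(dF t))‖) * 1 := by ring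
      _ ≤ (‖φF t‖ * ‖g (-(dF t))‖) * ((N:ℝ)⁻¹ * |((dF t : ℤ):ℝ)|) :=
          mul_le_mul_of_nonneg_left h1 (by positivity)
      _ = (N:ℝ)⁻¹ * (‖φF t‖ * (|((dF t : ℤ):ℝ)| * ‖g (-(dF t))‖)) := by ring
  -- step 3 : regroup by frequency
  have hdmem : ∀ t ∈ T', dF t ∈ A' := by
    intro t ht
    rw [hA'def, Finset.mem_sdiff]
    refine ⟨?_, (Finset.mem_filter.mp ht).2⟩
    have htK3 := (Finset.mem_filter.mp ht).1
    have h1 := (Finset.mem_product.mp htK3).1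
    have h2 := (Finset.mem_product.mp htK3).2
    have h11 := (Finset.mem_product.mp h1).1
    have h12 := (Finset.mem_product.mp h1).2
    rw [hKdef, Finset.mem_Icc] at h11 h12 h2
    simp only [Finset.mem_Icc, hdFdef]
    omega
  have hregroup : ∑ t ∈ T', ‖φF t‖ * (|((dF t : ℤ):ℝ)| * ‖g (-(dF t))‖)
      = ∑ a ∈ A', Ft a * (|(a:ℝ)| * ‖g (-a)‖) := by
    rw [KeyDet.regroup T' A' dF hdmem (fun t => ‖φF t‖) (fun a => |(a:ℝ)| * ‖g (-a)‖)]
    refine Finset.sum_congr rfl fun a ha => ?_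
    congr 1
    rw [hFtdef]
    refine Finset.sum_subset (Finset.filter_subset _ _) fun t htK3 htn => ?_
    have hinK : dF t ∈ K := by
      by_contra hno
      exact htn (Finset.mem_filter.mpr ⟨htK3, hno⟩)
    rw [if_neg]
    intro hEq
    rw [hEq] at hinK
    rw [hA'def] at ha
    exact (Finset.mem_sdiff.mp ha).2 hinK
  -- pointwise bound on |a| ‖g(-a)‖
  have hnormφG : ∀ s : ℤ × (ℤ × ℤ), ‖φG s‖ = ‖c s.1‖ * (‖c s.2.1‖ * ‖c s.2.2‖) := by
    intro s
    simp [hφGdef, norm_mul, RCLike.norm_conj]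
  have hpoint : ∀ a : ℤ, |(a:ℝ)| * ‖g (-a)‖
      ≤ (∑ p ∈ K ×ˢ K, (‖c p.1‖ * ‖c p.2‖) * w ((-1) * a + (p.1 + p.2)))
        + (∑ p ∈ K ×ˢ K, (‖c p.1‖ * ‖c p.2‖) * w (1 * a + (p.1 - p.2)))
        + (∑ p ∈ K ×ˢ K, (‖c p.1‖ * ‖c p.2‖) * w (1 * a + (p.2 - p.1))) := by
    intro a
    have hg1 : ‖g (-a)‖ ≤ ∑ s ∈ K ×ˢ (K ×ˢ K), (if dG s = -a then ‖φG s‖ else 0) := by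
      rw [hgdef]
      refine (norm_sum_le _ _).trans_eq ?_
      exact Finset.sum_congr rfl fun s _ => by split_ifs <;> simp
    have h2 : |(a:ℝ)| * ‖g (-a)‖
        ≤ ∑ s ∈ K ×ˢ (K ×ˢ K), (if dG s = -a then |(a:ℝ)| * ‖φG s‖ else 0) := by
      calc |(a:ℝ)| * ‖g (-a)‖
          ≤ |(a:ℝ)| * ∑ s ∈ K ×ˢ (K ×ˢ K), (if dG s = -a then ‖φG s‖ else 0) :=
            mul_le_mul_of_nonneg_left hg1 (abs_nonneg _)
        _ = _ := by
            rw [Finset.mul_sum]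
            exact Finset.sum_congr rfl fun s _ => by split_ifs <;> ring
    have h3 : (∑ s ∈ K ×ˢ (K ×ˢ K), (if dG s = -a then |(a:ℝ)| * ‖φG s‖ else 0))
        ≤ ∑ s ∈ K ×ˢ (K ×ˢ K), (if dG s = -a
            then (|((s.1:ℤ):ℝ)| + |((s.2.1:ℤ):ℝ)| + |((s.2.2:ℤ):ℝ)|) * ‖φG s‖ else 0) := by
      refine Finset.sum_le_sum fun s _ => ?_
      split_ifs with h
      · refine mul_le_mul_of_nonneg_right ?_ (norm_nonneg _)
        have hEq : (a:ℝ) = ((s.1:ℤ):ℝ) - ((s.2.1:ℤ):ℝ) + ((s.2.2:ℤ):ℝ) := by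
          have h' : a = s.1 - s.2.1 + s.2.2 := by
            simp only [hdGdef] at h
            omega
          rw [h']
          push_cast
          ring
        rw [hEq, sub_eq_add_neg]
        calc |((s.1:ℤ):ℝ) + -((s.2.1:ℤ):ℝ) + ((s.2.2:ℤ):ℝ)|
            ≤ |((s.1:ℤ):ℝ) + -((s.2.1:ℤ):ℝ)| + |((s.2.2:ℤ):ℝ)| := abs_add_le _ _
          _ ≤ (|((s.1:ℤ):ℝ)| + |-((s.2.1:ℤ):ℝ)|) + |((s.2.2:ℤ):ℝ)| :=
              add_le_add_left (abs_add_le _ _) _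
          _ = |((s.1:ℤ):ℝ)| + |((s.2.1:ℤ):ℝ)| + |((s.2.2:ℤ):ℝ)| := by rw [abs_neg]
      · exact le_refl 0
    have hsplit3 : (∑ s ∈ K ×ˢ (K ×ˢ K), (if dG s = -a
            then (|((s.1:ℤ):ℝ)| + |((s.2.1:ℤ):ℝ)| + |((s.2.2:ℤ):ℝ)|) * ‖φG s‖ else 0))
        = (∑ s ∈ K ×ˢ (K ×ˢ K), (if dG s = -a then |((s.1:ℤ):ℝ)| * ‖φG s‖ else 0))
          + (∑ s ∈ K ×ˢ (K ×ˢ K), (if dG s = -a then |((s.2.1:ℤ):ℝ)| * ‖φG s‖ else 0))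
          + (∑ s ∈ K ×ˢ (K ×ˢ K), (if dG s = -a then |((s.2.2:ℤ):ℝ)| * ‖φG s‖ else 0)) := by
      rw [← Finset.sum_add_distrib, ← Finset.sum_add_distrib]
      exact Finset.sum_congr rfl fun s _ => by split_ifs <;> ring
    -- collapse |s.1| term  (gives the (p.1 - p.2) form)
    have hT1 : (∑ s ∈ K ×ˢ (K ×ˢ K), (if dG s = -a then |((s.1:ℤ):ℝ)| * ‖φG s‖ else 0))
        = ∑ p ∈ K ×ˢ K, (‖c p.1‖ * ‖c p.2‖) * w (1 * a + (p.1 - p.2)) := by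
      rw [Finset.sum_product, Finset.sum_comm]
      refine Finset.sum_congr rfl fun qr _ => ?_
      have hcong : ∀ p ∈ K, (if dG (p, qr) = -a then |((p:ℤ):ℝ)| * ‖φG (p, qr)‖ else 0)
          = (if p = qr.1 - qr.2 + a then w p * (‖c qr.1‖ * ‖c qr.2‖) else 0) := by
        intro p _
        refine if_congr ?_ ?_ rfl
        · simp only [hdGdef]; omega
        · rw [hnormφG]; simp only [hwdef]; ring
      rw [Finset.sum_congr rfl hcong,
        KeyDet.collapse K w hw0 (‖c qr.1‖ * ‖c qr.2‖) (qr.1 - qr.2 + a) _ (fun p => Iff.rfl),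
        show qr.1 - qr.2 + a = 1 * a + (qr.1 - qr.2) by ring]
      ring
    -- collapse |s.2.1| term (gives the -a + p.1 + p.2 form)
    have hT2 : (∑ s ∈ K ×ˢ (K ×ˢ K), (if dG s = -a then |((s.2.1:ℤ):ℝ)| * ‖φG s‖ else 0))
        = ∑ p ∈ K ×ˢ K, (‖c p.1‖ * ‖c p.2‖) * w ((-1) * a + (p.1 + p.2)) := by
      rw [Finset.sum_product]
      have e1 : ∀ p ∈ K, (∑ qr ∈ K ×ˢ K,
            (if dG (p, qr) = -a then |((qr.1:ℤ):ℝ)| * ‖φG (p, qr)‖ else 0))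
          = ∑ r ∈ K, w (p + r - a) * (‖c p‖ * ‖c r‖) := by
        intro p _
        rw [Finset.sum_product, Finset.sum_comm]
        refine Finset.sum_congr rfl fun r _ => ?_
        have hcong : ∀ q ∈ K, (if dG (p, (q, r)) = -a then |((q:ℤ):ℝ)| * ‖φG (p, (q, r))‖ else 0)
            = (if q = p + r - a then w q * (‖c p‖ * ‖c r‖) else 0) := by
          intro q _
          refine if_congr ?_ ?_ rfl
          · simp only [hdGdef]; omega
          · rw [hnormφG]; simp only [hwdef]; ring
        rw [Finset.sum_congr rfl hcong,
          KeyDet.collapse K w hw0 (‖c p‖ * ‖c r‖) (p + r - a) _ (fun q => Iff.rfl)]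
      rw [Finset.sum_congr rfl e1]
      conv_rhs => rw [Finset.sum_product]
      refine Finset.sum_congr rfl fun p _ => Finset.sum_congr rfl fun r _ => ?_
      rw [show p + r - a = (-1) * a + (p + r) by ring]
      ring
    -- collapse |s.2.2| term (gives the p.2 - p.1 form)
    have hT3 : (∑ s ∈ K ×ˢ (K ×ˢ K), (if dG s = -a then |((s.2.2:ℤ):ℝ)| * ‖φG s‖ else 0))
        = ∑ p ∈ K ×ˢ K, (‖c p.1‖ * ‖c p.2‖) * w (1 * a + (p.2 - p.1)) := by
      rw [Finset.sum_product]
      have e1 : ∀ p ∈ K, (∑ qr ∈ K ×ˢ K,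
            (if dG (p, qr) = -a then |((qr.2:ℤ):ℝ)| * ‖φG (p, qr)‖ else 0))
          = ∑ q ∈ K, w (q - p + a) * (‖c p‖ * ‖c q‖) := by
        intro p _
        rw [Finset.sum_product]
        refine Finset.sum_congr rfl fun q _ => ?_
        have hcong : ∀ r ∈ K, (if dG (p, (q, r)) = -a then |((r:ℤ):ℝ)| * ‖φG (p, (q, r))‖ else 0)
            = (if r = q - p + a then w r * (‖c p‖ * ‖c q‖) else 0) := by
          intro r _
          refine if_congr ?_ ?_ rfl
          · simp only [hdGdef]; omega
          · rw [hnormφG]; simp only [hwdef]; ring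
        rw [Finset.sum_congr rfl hcong,
          KeyDet.collapse K w hw0 (‖c p‖ * ‖c q‖) (q - p + a) _ (fun r => Iff.rfl)]
      rw [Finset.sum_congr rfl e1]
      conv_rhs => rw [Finset.sum_product]
      refine Finset.sum_congr rfl fun p _ => Finset.sum_congr rfl fun q _ => ?_
      rw [show q - p + a = 1 * a + (q - p) by ring]
      ring
    calc |(a:ℝ)| * ‖g (-a)‖ ≤ _ := h2
      _ ≤ _ := h3
      _ = _ := hsplit3
      _ = _ := by rw [hT1, hT2, hT3]; ring
  -- Ft in convolution form
  have hwnn : ∀ m, 0 ≤ w m := fun m => by simp only [hwdef]; positivity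
  have hFtform : ∀ a : ℤ, Ft a
      = ∑ p ∈ K ×ˢ K, (‖c p.1‖ * ‖c p.2‖) * w (1 * a + (p.2 - p.1)) := by
    intro a
    simp only [hFtdef]
    rw [Finset.sum_product]
    refine Finset.sum_congr rfl fun jk _ => ?_
    have hcong : ∀ l ∈ K, (if dF (jk, l) = a then ‖φF (jk, l)‖ else 0)
        = (if l = a - jk.1 + jk.2 then w l * (‖c jk.1‖ * ‖c jk.2‖) else 0) := by
      intro l _
      refine if_congr ?_ ?_ rfl
      · simp only [hdFdef]; omega
      · simp only [hφFdef, hwdef, norm_mul, RCLike.norm_conj, Complex.norm_I, mul_one,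
          Complex.norm_intCast]
        ring
    rw [Finset.sum_congr rfl hcong,
      KeyDet.collapse K w hw0 (‖c jk.1‖ * ‖c jk.2‖) (a - jk.1 + jk.2) _ (fun l => Iff.rfl),
      show a - jk.1 + jk.2 = 1 * a + (jk.2 - jk.1) by ring]
    ring
  have hFtnn : ∀ a, 0 ≤ Ft a := by
    intro a
    rw [hFtform a]
    exact Finset.sum_nonneg fun p _ => mul_nonneg (by positivity) (hwnn _)
  have hBnn : ∀ (ε : ℤ) (τ : ℤ × ℤ → ℤ) (a : ℤ),
      0 ≤ ∑ p ∈ K ×ˢ K, (‖c p.1‖ * ‖c p.2‖) * w (ε * a + τ p) := fun ε τ a =>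
    Finset.sum_nonneg fun p _ => mul_nonneg (by positivity) (hwnn _)
  -- Cauchy-Schwarz + Young
  have hCS : ∀ (ε : ℤ), (ε = 1 ∨ ε = -1) → ∀ (τ : ℤ × ℤ → ℤ),
      ∑ a ∈ A', Ft a * (∑ p ∈ K ×ˢ K, (‖c p.1‖ * ‖c p.2‖) * w (ε * a + τ p))
      ≤ ((∑ k ∈ K, ‖c k‖)^2)^2 * ∑ m ∈ K, (w m)^2 := by
    intro ε hε τ
    have hYF : ∑ a ∈ A', (Ft a)^2
        ≤ ((∑ k ∈ K, ‖c k‖)^2)^2 * ∑ m ∈ K, (w m)^2 := by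
      have hc2 : ∀ a ∈ A', (Ft a)^2
          = (∑ p ∈ K ×ˢ K, (‖c p.1‖ * ‖c p.2‖) * w (1 * a + (p.2 - p.1)))^2 :=
        fun a _ => by rw [hFtform a]
      rw [Finset.sum_congr rfl hc2]
      exact KeyDet.young_pair A' K c w hw0 1 (Or.inl rfl) _
    have hYB := KeyDet.young_pair A' K c w hw0 ε hε τ
    have h1 := KeyDet.cs_sqrt A' Ft
      (fun a => ∑ p ∈ K ×ˢ K, (‖c p.1‖ * ‖c p.2‖) * w (ε * a + τ p))
      (fun a _ => hFtnn a) (fun a _ => hBnn ε τ a)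
    have hXnn : (0:ℝ) ≤ ((∑ k ∈ K, ‖c k‖)^2)^2 * ∑ m ∈ K, (w m)^2 := by
      refine mul_nonneg (by positivity) (Finset.sum_nonneg fun m _ => sq_nonneg _)
    calc ∑ a ∈ A', Ft a * (∑ p ∈ K ×ˢ K, (‖c p.1‖ * ‖c p.2‖) * w (ε * a + τ p))
        ≤ _ := h1
      _ ≤ Real.sqrt (((∑ k ∈ K, ‖c k‖)^2)^2 * ∑ m ∈ K, (w m)^2)
          * Real.sqrt (((∑ k ∈ K, ‖c k‖)^2)^2 * ∑ m ∈ K, (w m)^2) :=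
          mul_le_mul (Real.sqrt_le_sqrt hYF) (Real.sqrt_le_sqrt hYB)
            (Real.sqrt_nonneg _) (Real.sqrt_nonneg _)
      _ = _ := Real.mul_self_sqrt hXnn
  -- the grouped sum bound
  have hS0 : (∑ a ∈ A', Ft a * (|(a:ℝ)| * ‖g (-a)‖))
      ≤ 3 * (((∑ k ∈ K, ‖c k‖)^2)^2 * ∑ m ∈ K, (w m)^2) := by
    have h1 : (∑ a ∈ A', Ft a * (|(a:ℝ)| * ‖g (-a)‖))
        ≤ ∑ a ∈ A', Ft a *
            ((∑ p ∈ K ×ˢ K, (‖c p.1‖ * ‖c p.2‖) * w ((-1) * a + (p.1 + p.2)))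
            + (∑ p ∈ K ×ˢ K, (‖c p.1‖ * ‖c p.2‖) * w (1 * a + (p.1 - p.2)))
            + (∑ p ∈ K ×ˢ K, (‖c p.1‖ * ‖c p.2‖) * w (1 * a + (p.2 - p.1)))) :=
      Finset.sum_le_sum fun a _ => mul_le_mul_of_nonneg_left (hpoint a) (hFtnn a)
    have h2 : (∑ a ∈ A', Ft a *
            ((∑ p ∈ K ×ˢ K, (‖c p.1‖ * ‖c p.2‖) * w ((-1) * a + (p.1 + p.2)))
            + (∑ p ∈ K ×ˢ K, (‖c p.1‖ * ‖c p.2‖) * w (1 * a + (p.1 - p.2)))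
            + (∑ p ∈ K ×ˢ K, (‖c p.1‖ * ‖c p.2‖) * w (1 * a + (p.2 - p.1)))))
        = (∑ a ∈ A', Ft a * (∑ p ∈ K ×ˢ K, (‖c p.1‖ * ‖c p.2‖) * w ((-1) * a + (p.1 + p.2))))
          + (∑ a ∈ A', Ft a * (∑ p ∈ K ×ˢ K, (‖c p.1‖ * ‖c p.2‖) * w (1 * a + (p.1 - p.2))))
          + (∑ a ∈ A', Ft a * (∑ p ∈ K ×ˢ K, (‖c p.1‖ * ‖c p.2‖) * w (1 * a + (p.2 - p.1)))) := by
      rw [← Finset.sum_add_distrib, ← Finset.sum_add_distrib]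
      exact Finset.sum_congr rfl fun a _ => by ring
    have hc1 := hCS (-1) (Or.inr rfl) (fun p => p.1 + p.2)
    have hc2 := hCS 1 (Or.inl rfl) (fun p => p.1 - p.2)
    have hc3 := hCS 1 (Or.inl rfl) (fun p => p.2 - p.1)
    calc (∑ a ∈ A', Ft a * (|(a:ℝ)| * ‖g (-a)‖)) ≤ _ := h1
      _ = _ := h2
      _ ≤ 3 * (((∑ k ∈ K, ‖c k‖)^2)^2 * ∑ m ∈ K, (w m)^2) := by linarith
  -- Parseval
  have hcv : Continuous v := by
    rw [hvfun]
    exact continuous_finset_sum _ fun k _ => continuous_const.mul (KeyDet.continuous_e _)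
  have hcd : Continuous (deriv v) := by
    rw [hderiv]
    exact continuous_finset_sum _ fun k _ => continuous_const.mul (KeyDet.continuous_e _)
  have hdiag : ∀ (z : ℤ → ℂ),
      (∑ j ∈ K, ∑ k ∈ K, (if j + -k = 0 then z j * (starRingEnd ℂ) (z k) else 0))
      = ((∑ k ∈ K, ‖z k‖^2 : ℝ) : ℂ) := by
    intro z
    rw [Complex.ofReal_sum]
    refine Finset.sum_congr rfl fun j hj => ?_
    have hcong : ∀ k ∈ K, (if j + -k = 0 then z j * (starRingEnd ℂ) (z k) else 0)
        = (if j = k then z j * (starRingEnd ℂ) (z k) else 0) :=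
      fun k _ => if_congr (by omega) rfl rfl
    rw [Finset.sum_congr rfl hcong,
      Finset.sum_ite_eq K j (fun k => z j * (starRingEnd ℂ) (z k)), if_pos hj,
      Complex.mul_conj]
    rw [Complex.normSq_eq_norm_sq]
  have hPar1 : (∫ x in (0:ℝ)..(2*π), ‖v x‖^2) = 2*π * ∑ k ∈ K, ‖c k‖^2 := by
    have hptw : ∀ x : ℝ, ‖v x‖^2 = ((v x) * (starRingEnd ℂ) (v x)).re := by
      intro x
      rw [Complex.mul_conj]
      rw [Complex.normSq_eq_norm_sq, Complex.ofReal_re]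
    rw [intervalIntegral.integral_congr (g := fun x => ((v x) * (starRingEnd ℂ) (v x)).re)
      (fun x _ => hptw x)]
    rw [← KeyDet.re_integral (fun x => v x * (starRingEnd ℂ) (v x)) (hcv.mul (Complex.continuous_conj.comp hcv))]
    have hic : (∫ x in (0:ℝ)..(2*π), v x * (starRingEnd ℂ) (v x))
        = ∫ x in (0:ℝ)..(2*π), (∑ k ∈ K, c k * KeyDet.e k x)
            * (∑ k ∈ K, (starRingEnd ℂ) (c k) * KeyDet.e (-k) x) :=
      intervalIntegral.integral_congr fun x _ => by rw [hconj x, hv x]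
    rw [hic, KeyDet.key_integral K K c (fun k => (starRingEnd ℂ) (c k))
      (fun k => k) (fun k => -k), hdiag c]
    rw [show (2*(π:ℂ)) * ((∑ k ∈ K, ‖c k‖^2 : ℝ) : ℂ)
        = (((2*π) * ∑ k ∈ K, ‖c k‖^2 : ℝ) : ℂ) by push_cast; ring, Complex.ofReal_re]
  have hdconj : ∀ x, (starRingEnd ℂ) (deriv v x)
      = ∑ k ∈ K, (starRingEnd ℂ) ((k:ℂ) * Complex.I * c k) * KeyDet.e (-k) x := by
    intro x
    simp only [hderiv]
    rw [map_sum]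
    exact Finset.sum_congr rfl fun k _ => by rw [map_mul, KeyDet.conj_e]
  have hPar2 : (∫ x in (0:ℝ)..(2*π), ‖deriv v x‖^2)
      = 2*π * ∑ k ∈ K, (k:ℝ)^2 * ‖c k‖^2 := by
    have hptw : ∀ x : ℝ, ‖deriv v x‖^2 = ((deriv v x) * (starRingEnd ℂ) (deriv v x)).re := by
      intro x
      rw [Complex.mul_conj]
      rw [Complex.normSq_eq_norm_sq, Complex.ofReal_re]
    rw [intervalIntegral.integral_congr
      (g := fun x => ((deriv v x) * (starRingEnd ℂ) (deriv v x)).re) (fun x _ => hptw x)]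
    rw [← KeyDet.re_integral (fun x => deriv v x * (starRingEnd ℂ) (deriv v x)) (hcd.mul (Complex.continuous_conj.comp hcd))]
    have hic : (∫ x in (0:ℝ)..(2*π), deriv v x * (starRingEnd ℂ) (deriv v x))
        = ∫ x in (0:ℝ)..(2*π), (∑ k ∈ K, ((k:ℂ) * Complex.I * c k) * KeyDet.e k x)
            * (∑ k ∈ K, (starRingEnd ℂ) ((k:ℂ) * Complex.I * c k) * KeyDet.e (-k) x) :=
      intervalIntegral.integral_congr fun x _ => by rw [hdconj x, hderiv]
    rw [hic, KeyDet.key_integral K K (fun k => (k:ℂ) * Complex.I * c k)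
      (fun k => (starRingEnd ℂ) ((k:ℂ) * Complex.I * c k)) (fun k => k) (fun k => -k),
      hdiag (fun k => (k:ℂ) * Complex.I * c k)]
    have hnrm : (∑ k ∈ K, ‖(k:ℂ) * Complex.I * c k‖^2 : ℝ)
        = ∑ k ∈ K, (k:ℝ)^2 * ‖c k‖^2 := by
      refine Finset.sum_congr rfl fun k _ => ?_
      simp only [norm_mul, Complex.norm_I, mul_one, Complex.norm_intCast]
      rw [mul_pow, _root_.sq_abs]
    rw [hnrm]
    rw [show (2*(π:ℂ)) * ((∑ k ∈ K, (k:ℝ)^2 * ‖c k‖^2 : ℝ) : ℂ)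
        = (((2*π) * ∑ k ∈ K, (k:ℝ)^2 * ‖c k‖^2 : ℝ) : ℂ) by push_cast; ring,
      Complex.ofReal_re]
  have hParseval : (∫ x in (0:ℝ)..(2*π), (‖v x‖^2 + ‖deriv v x‖^2))
      = 2*π * ∑ k ∈ K, (1+(k:ℝ)^2) * ‖c k‖^2 := by
    rw [intervalIntegral.integral_add ((hcv.norm.fun_pow 2).intervalIntegrable _ _)
      ((hcd.norm.fun_pow 2).intervalIntegrable _ _), hPar1, hPar2, ← mul_add,
      ← Finset.sum_add_distrib]
    congr 1
    exact Finset.sum_congr rfl fun k _ => by ring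
  have hQv0 : (0:ℝ) ≤ ∑ k ∈ K, (1+(k:ℝ)^2) * ‖c k‖^2 :=
    Finset.sum_nonneg fun k _ => by positivity
  have hQM : 2*π * (∑ k ∈ K, (1+(k:ℝ)^2) * ‖c k‖^2) ≤ M^2 := by
    have h0 : (0:ℝ) ≤ 2*π * (∑ k ∈ K, (1+(k:ℝ)^2) * ‖c k‖^2) := by positivity
    have hM' := hM
    rw [hParseval] at hM'
    calc 2*π * (∑ k ∈ K, (1+(k:ℝ)^2) * ‖c k‖^2)
        = (Real.sqrt (2*π * (∑ k ∈ K, (1+(k:ℝ)^2) * ‖c k‖^2)))^2 := (Real.sq_sqrt h0).symm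
      _ ≤ M^2 := pow_le_pow_left₀ (Real.sqrt_nonneg _) hM' 2
  have hA1 : (∑ k ∈ K, ‖c k‖)^2 ≤ 5 * ∑ k ∈ K, (1+(k:ℝ)^2) * ‖c k‖^2 := by
    have h := Finset.sum_mul_sq_le_sq_mul_sq K (fun k => Real.sqrt ((1+(k:ℝ)^2)⁻¹))
      (fun k => Real.sqrt (1+(k:ℝ)^2) * ‖c k‖)
    have hfg : ∀ k ∈ K, Real.sqrt ((1+(k:ℝ)^2)⁻¹) * (Real.sqrt (1+(k:ℝ)^2) * ‖c k‖)
        = ‖c k‖ := by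
      intro k _
      have hpos : (0:ℝ) < 1+(k:ℝ)^2 := by positivity
      rw [Real.sqrt_inv, ← mul_assoc,
        inv_mul_cancel₀ (ne_of_gt (Real.sqrt_pos.mpr hpos)), one_mul]
    have hf2 : ∀ k ∈ K, (Real.sqrt ((1+(k:ℝ)^2)⁻¹))^2 = (1+(k:ℝ)^2)⁻¹ :=
      fun k _ => Real.sq_sqrt (by positivity)
    have hg2 : ∀ k ∈ K, (Real.sqrt (1+(k:ℝ)^2) * ‖c k‖)^2 = (1+(k:ℝ)^2) * ‖c k‖^2 := by
      intro k _
      rw [mul_pow, Real.sq_sqrt (by positivity)]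
    rw [Finset.sum_congr rfl hfg, Finset.sum_congr rfl hf2, Finset.sum_congr rfl hg2] at h
    have h5 := KeyDet.sum_inv_one_add_sq N
    rw [← hKdef] at h5
    calc (∑ k ∈ K, ‖c k‖)^2 ≤ (∑ k ∈ K, (1+(k:ℝ)^2)⁻¹) * ∑ k ∈ K, (1+(k:ℝ)^2) * ‖c k‖^2 := h
      _ ≤ 5 * ∑ k ∈ K, (1+(k:ℝ)^2) * ‖c k‖^2 := mul_le_mul_of_nonneg_right h5 hQv0
  have hWQ : (∑ m ∈ K, (w m)^2) ≤ ∑ k ∈ K, (1+(k:ℝ)^2) * ‖c k‖^2 := by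
    refine Finset.sum_le_sum fun m _ => ?_
    simp only [hwdef]
    rw [mul_pow, _root_.sq_abs]
    nlinarith [sq_nonneg (‖c m‖)]
  -- final numeric assembly
  set Qv : ℝ := ∑ k ∈ K, (1+(k:ℝ)^2) * ‖c k‖^2 with hQvdef
  have hS1 : (∑ a ∈ A', Ft a * (|(a:ℝ)| * ‖g (-a)‖)) ≤ 75 * Qv^3 := by
    have e1 : ((∑ k ∈ K, ‖c k‖)^2)^2 ≤ (5*Qv)^2 := pow_le_pow_left₀ (sq_nonneg _) hA1 2
    have e2 : ((∑ k ∈ K, ‖c k‖)^2)^2 * (∑ m ∈ K, (w m)^2) ≤ (5*Qv)^2 * Qv := by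
      refine mul_le_mul e1 hWQ (Finset.sum_nonneg fun m _ => sq_nonneg _) (by positivity)
    calc (∑ a ∈ A', Ft a * (|(a:ℝ)| * ‖g (-a)‖)) ≤ _ := hS0
      _ ≤ 3 * ((5*Qv)^2 * Qv) := by linarith
      _ = 75 * Qv^3 := by ring
  have hQ3 : 8*π^3*Qv^3 ≤ M^6 := by
    have h := pow_le_pow_left₀ (by positivity) hQM 3
    calc 8*π^3*Qv^3 = (2*π*Qv)^3 := by ring
      _ ≤ (M^2)^3 := h
      _ = M^6 := by ring
  have hpi2 : (75:ℝ) ≤ 8*π^2 := by nlinarith [Real.pi_gt_d6]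
  have h75 : 75*π*Qv^3 ≤ M^6 := by
    have e4 : 75*(π*Qv^3) ≤ 8*π^2*(π*Qv^3) :=
      mul_le_mul_of_nonneg_right hpi2 (by positivity)
    calc 75*π*Qv^3 = 75*(π*Qv^3) := by ring
      _ ≤ 8*π^2*(π*Qv^3) := e4
      _ = 8*π^3*Qv^3 := by ring
      _ ≤ M^6 := hQ3
  calc |(∫ x in (0:ℝ)..(2*π),
          projGt N (fun y => (v y * (starRingEnd ℂ) (v y)) * deriv v y) x *
            ((starRingEnd ℂ) (v x) * (v x * (starRingEnd ℂ) (v x)))).re|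
      ≤ 2*π * ∑ t ∈ T', ‖φF t‖ * ‖g (-(dF t))‖ := hstep1
    _ ≤ 2*π * ((N:ℝ)⁻¹ * ∑ t ∈ T', ‖φF t‖ * (|((dF t : ℤ):ℝ)| * ‖g (-(dF t))‖)) :=
        mul_le_mul_of_nonneg_left hstep2 (by positivity)
    _ = 2*π * ((N:ℝ)⁻¹ * ∑ a ∈ A', Ft a * (|(a:ℝ)| * ‖g (-a)‖)) := by rw [hregroup]
    _ ≤ 2*π * ((N:ℝ)⁻¹ * (75 * Qv^3)) := by
        refine mul_le_mul_of_nonneg_left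
          (mul_le_mul_of_nonneg_left hS1 (inv_nonneg.mpr hNR.le)) (by positivity)
    _ = 2 * (N:ℝ)⁻¹ * (75*π*Qv^3) := by ring
    _ ≤ 2 * (N:ℝ)⁻¹ * M^6 := by
        refine mul_le_mul_of_nonneg_left h75 (by positivity)
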